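/- Let F be a nonzero null two-form on the Minkowski vector space: F is an antisymmetric 4×4 real matrix with both invariants vanishing, I₁ := F_{μν}F^{μν} = 0 and I₂ := F*_{μν}F^{μν} = 0. Then there exist a nonzero null vector l and a spacelike vector w, orthogonal to l (i.e. η(l,w) = 0), such that F_{μν} = l_μ w_ν - l_ν w_μ. -/

import Mathlib

open Matrix BigOperators

/-- The Minkowski metric `η = diag(-1,1,1,1)` on `ℝ⁴`. -/
noncomputable def ηm : Matrix (Fin 4) (Fin 4) ℝ := Matrix.diagonal ![(-1 : ℝ), 1, 1, 1]

/-- Minkowski inner product of two (co)vectors. -/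
noncomputable def minkDot (u v : Fin 4 → ℝ) : ℝ := ∑ μ, ∑ ν, ηm μ ν * u μ * v ν

/-- Raising both indices of a two-form with the Minkowski metric:
`F^{μν} = η^{μα} η^{νβ} F_{αβ}` (numerically `η F η` since `η⁻¹ = η`). -/
noncomputable def raiseF (F : Matrix (Fin 4) (Fin 4) ℝ) : Matrix (Fin 4) (Fin 4) ℝ :=
  ηm * F * ηm

/-- The totally antisymmetric Levi-Civita symbol `ε_{abcd}` with `ε_{0123} = 1`,
realized as the determinant of the matrix whose rows are the standard basis
vectors `e_a, e_b, e_c, e_d`. -/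
noncomputable def epsLC (a b c d : Fin 4) : ℝ :=
  Matrix.det (Matrix.of fun i j => if ![a, b, c, d] i = j then (1 : ℝ) else 0)

/-- The Hodge dual `F*_{μν} = (1/2) η_{μναβ} F^{αβ}` of a two-form. -/
noncomputable def hodge (F : Matrix (Fin 4) (Fin 4) ℝ) : Matrix (Fin 4) (Fin 4) ℝ :=
  Matrix.of fun μ ν => (1 / 2) * ∑ α, ∑ β, epsLC μ ν α β * raiseF F α β

/-! Write `F` through its electric and magnetic parts, `E_i = F_{0i}` and `F_{ij} = ε_{ijk} B_k`.
Raising both indices flips the sign of `E`, and the Hodge dual sends `(E, B)` to `(B, -E)`, so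
`I₁ = 2 (|B|² - |E|²)` and `I₂ = -4 E·B`; the Levi-Civita symbol is evaluated by comparing the
Vandermonde determinants of `(a, b, c, d)` and `(0, 1, 2, 3)`. For a nonzero null field `E ≠ 0`,
and with `p = E × B / |E|²` take `l = (1, p)` and `w = (0, E)`: since `E·B = 0`,
`p × E = B`, which says exactly that `F = l ∧ w`, and `|p| = |E||B| / |E|² = 1` makes `l` null. -/

open Finset in
theorem det_of_ite_mul_prod_Ioi_sub {n : ℕ} (f : Fin n → Fin n) :
    (Matrix.of fun i j => if f i = j then (1 : ℝ) else 0).det *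
        ∏ i : Fin n, ∏ j ∈ Ioi i, ((j : ℕ) - (i : ℕ) : ℝ) =
      ∏ i : Fin n, ∏ j ∈ Ioi i, ((f j : ℕ) - (f i : ℕ) : ℝ) := by
  have h : (Matrix.of fun i j => if f i = j then (1 : ℝ) else 0) *
      vandermonde (fun i : Fin n => ((i : ℕ) : ℝ)) = vandermonde (fun i => ((f i : ℕ) : ℝ)) := by
    ext i j
    simp [Matrix.mul_apply, vandermonde_apply]
  rw [← det_vandermonde, ← det_vandermonde, ← det_mul, h]

open Finset in
theorem Fin.prod_Ioi_four {M : Type*} [CommMonoid M] (g : Fin 4 → Fin 4 → M) :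
    ∏ i : Fin 4, ∏ j ∈ Ioi i, g i j = g 0 1 * g 0 2 * g 0 3 * g 1 2 * g 1 3 * g 2 3 := by
  rw [Fin.prod_univ_four, show Ioi (0 : Fin 4) = {1, 2, 3} by decide,
    show Ioi (1 : Fin 4) = {2, 3} by decide, show Ioi (2 : Fin 4) = {3} by decide,
    show Ioi (3 : Fin 4) = ∅ by decide]
  simp [mul_assoc]

theorem epsLC_eq (a b c d : Fin 4) :
    epsLC a b c d = ((b : ℕ) - (a : ℕ) : ℝ) * ((c : ℕ) - (a : ℕ)) * ((d : ℕ) - (a : ℕ)) *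
      ((c : ℕ) - (b : ℕ)) * ((d : ℕ) - (b : ℕ)) * ((d : ℕ) - (c : ℕ)) / 12 := by
  have h := det_of_ite_mul_prod_Ioi_sub ![a, b, c, d]
  rw [Fin.prod_Ioi_four, Fin.prod_Ioi_four] at h
  rw [epsLC, eq_div_iff (by norm_num)]
  convert h using 1
  · norm_num
  · rfl

def fieldStrength (E B : Fin 3 → ℝ) : Matrix (Fin 4) (Fin 4) ℝ :=
  !![0, E 0, E 1, E 2;
    -E 0, 0, B 2, -B 1;
    -E 1, -B 2, 0, B 0;
    -E 2, B 1, -B 0, 0]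

@[simp]
theorem fieldStrength_zero : fieldStrength 0 0 = 0 := by
  ext μ ν; fin_cases μ <;> fin_cases ν <;> simp [fieldStrength]

theorem exists_eq_fieldStrength_of_transpose_eq_neg {F : Matrix (Fin 4) (Fin 4) ℝ}
    (h : Fᵀ = -F) : ∃ E B, F = fieldStrength E B := by
  have hF : ∀ μ ν, F ν μ = -F μ ν := fun μ ν => congrFun (congrFun h μ) ν
  have hdiag : ∀ μ, F μ μ = 0 := fun μ => by linarith [hF μ μ]
  refine ⟨![F 0 1, F 0 2, F 0 3], ![F 2 3, F 3 1, F 1 2], ?_⟩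
  ext μ ν
  fin_cases μ <;> fin_cases ν <;>
    simp [fieldStrength, hdiag, hF 0 1, hF 0 2, hF 0 3, hF 1 2, hF 3 1, hF 2 3]

theorem raiseF_fieldStrength (E B : Fin 3 → ℝ) :
    raiseF (fieldStrength E B) = fieldStrength (-E) B := by
  ext μ ν
  fin_cases μ <;> fin_cases ν <;> simp [raiseF, ηm, fieldStrength]

theorem hodge_fieldStrength (E B : Fin 3 → ℝ) :
    hodge (fieldStrength E B) = fieldStrength B (-E) := by
  ext μ ν
  rw [hodge, of_apply, raiseF_fieldStrength]
  fin_cases μ <;> fin_cases ν <;> simp [epsLC_eq, Fin.sum_univ_four, fieldStrength] <;> ring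

theorem sum_fieldStrength_mul_fieldStrength (E B E' B' : Fin 3 → ℝ) :
    ∑ μ, ∑ ν, fieldStrength E B μ ν * fieldStrength E' B' μ ν = 2 * (E ⬝ᵥ E' + B ⬝ᵥ B') := by
  simp only [fieldStrength, of_apply, Fin.sum_univ_four, dotProduct, Fin.sum_univ_three,
    cons_val_zero, cons_val_one, cons_val]
  ring

theorem minkDot_vecCons (a b : ℝ) (p q : Fin 3 → ℝ) :
    minkDot (vecCons a p) (vecCons b q) = -(a * b) + p ⬝ᵥ q := by
  simp [minkDot, ηm, diagonal_apply, Fin.sum_univ_succ, dotProduct]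

theorem fieldStrength_cross_apply (p E : Fin 3 → ℝ) (μ ν : Fin 4) :
    fieldStrength E (p ⨯₃ E) μ ν =
      vecCons 1 p μ * vecCons 0 E ν - vecCons 1 p ν * vecCons 0 E μ := by
  fin_cases μ <;> fin_cases ν <;> simp [fieldStrength, cross_apply]

theorem cross_cross_self_of_dotProduct_eq_zero {E B : Fin 3 → ℝ} (h : E ⬝ᵥ B = 0) :
    E ⨯₃ B ⨯₃ E = (E ⬝ᵥ E) • B := by
  rw [cross_cross_eq_smul_sub_smul, dotProduct_comm B, h, zero_smul, sub_zero]

theorem exists_null_wedge_eq_fieldStrength {E B : Fin 3 → ℝ} (hE : E ≠ 0)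
    (hEB : E ⬝ᵥ B = 0) (hBB : B ⬝ᵥ B = E ⬝ᵥ E) :
    ∃ l w : Fin 4 → ℝ, l ≠ 0 ∧ minkDot l l = 0 ∧ 0 < minkDot w w ∧ minkDot l w = 0 ∧
      ∀ μ ν, fieldStrength E B μ ν = l μ * w ν - l ν * w μ := by
  have hs : 0 < E ⬝ᵥ E := by simpa using dotProduct_self_star_pos_iff.mpr hE
  set p := (E ⬝ᵥ E)⁻¹ • E ⨯₃ B
  have hpE : p ⨯₃ E = B := by
    rw [map_smul, LinearMap.smul_apply, cross_cross_self_of_dotProduct_eq_zero hEB, smul_smul,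
      inv_mul_cancel₀ hs.ne', one_smul]
  refine ⟨vecCons 1 p, vecCons 0 E, fun h => one_ne_zero (congrFun h 0), ?_, ?_, ?_, ?_⟩
  · rw [minkDot_vecCons, dotProduct_smul, smul_dotProduct, cross_dot_cross, hEB, hBB,
      smul_eq_mul, smul_eq_mul]
    field_simp
    ring
  · simpa [minkDot_vecCons] using hs
  · rw [minkDot_vecCons, smul_dotProduct, dotProduct_comm (E ⨯₃ B), dot_self_cross,
      smul_zero]
    ring
  · rw [← hpE]
    exact fieldStrength_cross_apply p E

/-- Canonical form of a nonzero null two-form: if both invariants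
`I₁ = F_{μν}F^{μν}` and `I₂ = F*_{μν}F^{μν}` vanish, then `F = l ∧ w` with `l`
null and nonzero, and `w` spacelike and orthogonal to `l`. -/
theorem null_two_form_canonical_form (F : Matrix (Fin 4) (Fin 4) ℝ)
    (hanti : Fᵀ = -F) (hF : F ≠ 0)
    (hI1 : ∑ μ, ∑ ν, F μ ν * raiseF F μ ν = 0)
    (hI2 : ∑ μ, ∑ ν, hodge F μ ν * raiseF F μ ν = 0) :
    ∃ l w : Fin 4 → ℝ, l ≠ 0 ∧ minkDot l l = 0 ∧ 0 < minkDot w w ∧ minkDot l w = 0 ∧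
      ∀ μ ν, F μ ν = l μ * w ν - l ν * w μ := by
  obtain ⟨E, B, rfl⟩ := exists_eq_fieldStrength_of_transpose_eq_neg hanti
  rw [raiseF_fieldStrength, sum_fieldStrength_mul_fieldStrength, dotProduct_neg] at hI1
  rw [hodge_fieldStrength, raiseF_fieldStrength, sum_fieldStrength_mul_fieldStrength,
    dotProduct_comm B, neg_dotProduct] at hI2
  have hBB : B ⬝ᵥ B = E ⬝ᵥ E := by linarith
  have hEB : E ⬝ᵥ B = 0 := by linarith
  have hE : E ≠ 0 := by
    rintro rfl
    rw [zero_dotProduct, dotProduct_self_eq_zero] at hBB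
    exact hF (by rw [hBB, fieldStrength_zero])
  exact exists_null_wedge_eq_fieldStrength hE hEB hBB
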